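/- Let P(z) = Σ_{k=0}^m A_k z^k be a matrix polynomial with A_0 and A_m both invertible. Then all eigenvalues of P lie in the annulus r₁ ≤ |z| ≤ r₂, where r₁ = min_{1≤k≤m} {2^{3(1−m)} C(2m,m+k) 𝒫_k² / (‖A_0^{-1}‖‖A_k‖)}^{1/k} and r₂ = max_{1≤k≤m} {2^{3(m−1)} C(2m,m+k)^{-1} 𝒫_k^{-2} ‖A_{m−k}‖‖A_m^{-1}‖}^{1/k}, with 𝒫_k the k-th Pell number. -/

import Mathlib

/-- Pell numbers. -/
def pell : ℕ → ℕ
  | 0 => 0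
  | 1 => 1
  | (n + 2) => 2 * pell (n + 1) + pell n

/-- Operator norm of a complex matrix, subordinate to the Euclidean vector norm. -/
noncomputable def opNorm {n : ℕ} (A : Matrix (Fin n) (Fin n) ℂ) : ℝ :=
  ‖Matrix.toEuclideanCLM (𝕜 := ℂ) A‖

/-!
Writing `A₀u = -∑_{k ≥ 1} λ^k A_k u` and applying `A₀⁻¹` gives
`1 ≤ ∑_{k=1}^m ‖A₀⁻¹‖ ‖A_k‖ |λ|^k`; the same argument for the reversed polynomial `z^m P(1/z)`
at `1/λ` gives `1 ≤ ∑_{k=1}^m ‖A_m⁻¹‖ ‖A_{m-k}‖ |λ|^{-k}`. By the identity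
`∑_{k=1}^m C(2m, m+k) 𝒫_k² = 8^(m-1)` the numbers `w_k = 2^(3(1-m)) C(2m, m+k) 𝒫_k²` sum to `1`,
so in each of the two inequalities some term is at least `w_k`, which is the bound on `|λ|`.
The identity is the binomial expansion of `(α - β)^(2m) = 8^m` for `α, β = 1 ± √2`, folded around
its middle term using `αβ = -1` and Binet's formula `α^k - β^k = (α - β) 𝒫_k`.
-/

open Finset

theorem sum_range_succ_eq_add_sum_Icc {M : Type*} [AddCommMonoid M] (f : ℕ → M) (m : ℕ) :
    ∑ k ∈ range (m + 1), f k = f 0 + ∑ k ∈ Icc 1 m, f k :=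
  sum_range_eq_add_Ico f m.succ_pos

theorem sum_range_choose_two_mul_smul {M : Type*} [AddCommMonoid M] (m : ℕ) (f : ℕ → M) :
    ∑ j ∈ range (2 * m + 1), (2 * m).choose j • f j =
      (2 * m).choose m • f m + ∑ k ∈ Icc 1 m, (2 * m).choose (m + k) • (f (m + k) + f (m - k)) := by
  have hlower : ∑ j ∈ range m, (2 * m).choose j • f j =
      ∑ k ∈ Icc 1 m, (2 * m).choose (m + k) • f (m - k) := by
    refine sum_nbij' (fun j => m - j) (fun k => m - k) ?_ ?_ ?_ ?_ ?_ <;>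
      simp only [mem_range, mem_Icc]
    · omega
    · omega
    · omega
    · omega
    · intro j hj
      rw [Nat.sub_sub_self hj.le, Nat.choose_symm_of_eq_add (by omega : 2 * m = j + (m + (m - j)))]
  rw [show 2 * m + 1 = m + (m + 1) by ring, sum_range_add, sum_range_succ_eq_add_sum_Icc, hlower]
  simp only [add_zero, smul_add, sum_add_distrib]
  abel

theorem add_pow_two_mul_of_mul_eq_one {R : Type*} [CommRing R] {x y : R} (h : x * y = 1) (m : ℕ) :
    (x + y) ^ (2 * m) = (2 * m).choose m +
      ∑ k ∈ Icc 1 m, ((2 * m).choose (m + k) : R) * (x ^ (2 * k) + y ^ (2 * k)) := by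
  have hmiddle : x ^ m * y ^ (2 * m - m) = 1 := by
    rw [show 2 * m - m = m by omega, ← mul_pow, h, one_pow]
  have hpair : ∀ k ∈ Icc 1 m, x ^ (m + k) * y ^ (2 * m - (m + k))
      + x ^ (m - k) * y ^ (2 * m - (m - k)) = x ^ (2 * k) + y ^ (2 * k) := by
    intro k hk
    have hkm : k ≤ m := (mem_Icc.1 hk).2
    have hxy : x ^ (m - k) * y ^ (m - k) = 1 := by rw [← mul_pow, h, one_pow]
    rw [show 2 * m - (m + k) = m - k by omega, show 2 * m - (m - k) = m - k + 2 * k by omega,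
      show m + k = m - k + 2 * k by omega, pow_add, pow_add]
    linear_combination (x ^ (2 * k) + y ^ (2 * k)) * hxy
  simp_rw [add_pow, mul_comm _ ((Nat.choose _ _ : R)), ← nsmul_eq_mul,
    sum_range_choose_two_mul_smul, hmiddle]
  rw [sum_congr rfl fun k hk => by rw [hpair k hk], nsmul_one]

theorem pow_sub_pow_eq_mul_pell {R : Type*} [CommRing R] {a b : R} (hsum : a + b = 2)
    (hprod : a * b = -1) : ∀ k, a ^ k - b ^ k = (a - b) * pell k
  | 0 => by simp [pell]
  | 1 => by simp [pell]
  | k + 2 => by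
    have hk := pow_sub_pow_eq_mul_pell hsum hprod k
    have hk1 := pow_sub_pow_eq_mul_pell hsum hprod (k + 1)
    simp only [pell]
    push_cast
    linear_combination (a + b) * hk1 - a * b * hk + (a - b) * (pell (k + 1) : R) * hsum
      - (a - b) * (pell k : R) * hprod

theorem pell_pos : ∀ {k : ℕ}, 0 < k → 0 < pell k
  | 1, _ => Nat.one_pos
  | k + 2, _ => by
    have := pell_pos (k := k + 1) (by omega)
    rw [pell]
    omega

theorem sum_choose_mul_pell_sq {m : ℕ} (hm : 0 < m) :
    ∑ k ∈ Icc 1 m, (2 * m).choose (m + k) * pell k ^ 2 = 8 ^ (m - 1) := by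
  set s : ℂ := ((√2 : ℝ) : ℂ)
  have hs : s ^ 2 = 2 := by rw [← Complex.ofReal_pow, Real.sq_sqrt zero_le_two]; norm_num
  -- `I ^ (2 * k) + (-I) ^ (2 * k) = 2 * (-1) ^ k`: expanding `(I - I) ^ (2 * m) = 0` in the same
  -- way accounts for the cross terms `2 (αβ) ^ k` of `(α ^ k - β ^ k) ^ 2`.
  have hsq (k : ℕ) : (1 + s) ^ (2 * k) + (-(1 - s)) ^ (2 * k)
      - (Complex.I ^ (2 * k) + (-Complex.I) ^ (2 * k)) = 8 * pell k ^ 2 := by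
    have hbinet : (1 + s) ^ k - (1 - s) ^ k = 2 * s * pell k := by
      rw [pow_sub_pow_eq_mul_pell (by ring) (by linear_combination -hs)]; ring
    have hprod : (1 + s) ^ k * (1 - s) ^ k = (-1) ^ k := by
      rw [← mul_pow]; congr 1; linear_combination -hs
    rw [(even_two_mul k).neg_pow, (even_two_mul k).neg_pow, pow_mul Complex.I, Complex.I_sq]
    linear_combination ((1 + s) ^ k - (1 - s) ^ k + 2 * s * pell k) * hbinet + 2 * hprod
      + 4 * (pell k : ℂ) ^ 2 * hs
  have hα := add_pow_two_mul_of_mul_eq_one (x := 1 + s) (y := -(1 - s)) (by linear_combination hs) m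
  have hI := add_pow_two_mul_of_mul_eq_one (x := Complex.I) (y := -Complex.I) (by simp) m
  have h8 : (8 : ℂ) * ↑(∑ k ∈ Icc 1 m, (2 * m).choose (m + k) * pell k ^ 2) = 8 * 8 ^ (m - 1) := by
    push_cast
    calc (8 : ℂ) * ∑ k ∈ Icc 1 m, ((2 * m).choose (m + k) : ℂ) * (pell k : ℂ) ^ 2
        = (1 + s + -(1 - s)) ^ (2 * m) - (Complex.I + -Complex.I) ^ (2 * m) := by
          rw [hα, hI, mul_sum, add_sub_add_left_eq_sub, ← sum_sub_distrib]
          exact sum_congr rfl fun k _ => by rw [← mul_sub, hsq]; ring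
      _ = 8 * 8 ^ (m - 1) := by
          rw [add_neg_cancel, zero_pow (by omega), sub_zero, ← pow_succ', Nat.sub_add_cancel hm,
            pow_mul, show (1 + s + -(1 - s)) ^ 2 = 8 by linear_combination 4 * hs]
  exact_mod_cast mul_left_cancel₀ (by norm_num) h8

noncomputable def pellWeight (m k : ℕ) : ℝ :=
  (2 : ℝ) ^ ((3 : ℤ) * (1 - (m : ℤ))) * (Nat.choose (2 * m) (m + k)) * (pell k : ℝ) ^ 2

theorem pellWeight_pos {m k : ℕ} (hk : k ∈ Icc 1 m) : 0 < pellWeight m k := by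
  obtain ⟨hk1, hkm⟩ := mem_Icc.1 hk
  have hchoose : 0 < (2 * m).choose (m + k) := Nat.choose_pos (by omega)
  have hpell : 0 < pell k := pell_pos hk1
  unfold pellWeight
  positivity

theorem sum_pellWeight {m : ℕ} (hm : 0 < m) : ∑ k ∈ Icc 1 m, pellWeight m k = 1 := by
  have hsum : ∑ k ∈ Icc 1 m, ((2 * m).choose (m + k) : ℝ) * (pell k : ℝ) ^ 2 = 8 ^ (m - 1) := by
    exact_mod_cast sum_choose_mul_pell_sq hm
  have hexp : (3 : ℤ) * (1 - (m : ℤ)) = -((3 * (m - 1) : ℕ) : ℤ) := by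
    push_cast [Nat.cast_sub hm]; ring
  simp only [pellWeight, mul_assoc, ← mul_sum, hsum]
  rw [hexp, zpow_neg, zpow_natCast, pow_mul]
  norm_num

theorem inf'_le_of_one_le_sum_mul_pow {m : ℕ} (hm : 0 < m) {a : ℕ → ℝ} {c x : ℝ} (hx : 0 ≤ x)
    (hne : ((Icc 1 m).filter fun k => a k ≠ 0).Nonempty)
    (h : 1 ≤ ∑ k ∈ Icc 1 m, c * a k * x ^ k) :
    ((Icc 1 m).filter fun k => a k ≠ 0).inf' hne
      (fun k => (pellWeight m k / (c * a k)) ^ ((1 : ℝ) / k)) ≤ x := by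
  obtain ⟨k, hk, hle⟩ := exists_le_of_sum_le (nonempty_Icc.2 hm) ((sum_pellWeight hm).trans_le h)
  have hw := pellWeight_pos hk
  have hk0 : k ≠ 0 := Nat.one_le_iff_ne_zero.1 (mem_Icc.1 hk).1
  have hca : 0 < c * a k := pos_of_mul_pos_left (hw.trans_le hle) (pow_nonneg hx k)
  have hak : a k ≠ 0 := by rintro h0; simp [h0] at hca
  calc _ ≤ (pellWeight m k / (c * a k)) ^ ((1 : ℝ) / k) := inf'_le _ (mem_filter.2 ⟨hk, hak⟩)
    _ ≤ (x ^ k) ^ ((1 : ℝ) / k) := by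
      refine Real.rpow_le_rpow (by positivity) ((div_le_iff₀ hca).2 ?_) (by positivity)
      linarith
    _ = x := by rw [one_div, Real.pow_rpow_inv_natCast hx hk0]

theorem le_sup'_of_one_le_sum_mul_inv_pow {m : ℕ} (hm : 0 < m) {a : ℕ → ℝ} {c x : ℝ} (hx : 0 < x)
    (h : 1 ≤ ∑ k ∈ Icc 1 m, c * a (m - k) * x⁻¹ ^ k) :
    x ≤ (Icc 1 m).sup' (nonempty_Icc.2 hm) fun k => ((2 : ℝ) ^ ((3 : ℤ) * ((m : ℤ) - 1))
      * ((Nat.choose (2 * m) (m + k) : ℝ))⁻¹ * ((pell k : ℝ) ^ 2)⁻¹ * a (m - k) * c)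
        ^ ((1 : ℝ) / k) := by
  obtain ⟨k, hk, hle⟩ := exists_le_of_sum_le (nonempty_Icc.2 hm) ((sum_pellWeight hm).trans_le h)
  have hw := pellWeight_pos hk
  have hk0 : k ≠ 0 := Nat.one_le_iff_ne_zero.1 (mem_Icc.1 hk).1
  have hbase : (2 : ℝ) ^ ((3 : ℤ) * ((m : ℤ) - 1)) * ((Nat.choose (2 * m) (m + k) : ℝ))⁻¹
      * ((pell k : ℝ) ^ 2)⁻¹ * a (m - k) * c = c * a (m - k) / pellWeight m k := by
    rw [pellWeight, show (3 : ℤ) * ((m : ℤ) - 1) = -((3 : ℤ) * (1 - (m : ℤ))) by ring, zpow_neg]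
    field_simp
  have hpow : x ^ k ≤ c * a (m - k) / pellWeight m k := by
    rw [le_div_iff₀ hw]
    calc x ^ k * pellWeight m k ≤ x ^ k * (c * a (m - k) * x⁻¹ ^ k) := by gcongr
      _ = c * a (m - k) := by rw [inv_pow]; field_simp
  calc x = (x ^ k) ^ ((1 : ℝ) / k) := by rw [one_div, Real.pow_rpow_inv_natCast hx.le hk0]
    _ ≤ (c * a (m - k) / pellWeight m k) ^ ((1 : ℝ) / k) := by gcongr
    _ ≤ _ := by
      rw [← hbase]
      exact le_sup' (fun k => ((2 : ℝ) ^ ((3 : ℤ) * ((m : ℤ) - 1))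
        * ((Nat.choose (2 * m) (m + k) : ℝ))⁻¹ * ((pell k : ℝ) ^ 2)⁻¹ * a (m - k) * c)
          ^ ((1 : ℝ) / k)) hk

section OperatorPolynomial

variable {𝕜 E : Type*} [NontriviallyNormedField 𝕜] [NormedAddCommGroup E] [NormedSpace 𝕜 E]
  {T : ℕ → E →L[𝕜] E} {S : E →L[𝕜] E} {m : ℕ} {z : 𝕜} {v : E}

theorem ne_zero_of_sum_pow_smul_eq_zero (hS : Function.LeftInverse S (T 0)) (hv : v ≠ 0)
    (h : ∑ k ∈ range (m + 1), z ^ k • T k v = 0) : z ≠ 0 := by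
  rintro rfl
  simp only [sum_range_succ', zero_pow (Nat.succ_ne_zero _), zero_smul, sum_const_zero, pow_zero,
    one_smul, zero_add] at h
  exact hv (by rw [← hS v, h, map_zero])

theorem one_le_sum_opNorm_mul_norm_pow (hS : Function.LeftInverse S (T 0)) (hv : v ≠ 0)
    (h : ∑ k ∈ range (m + 1), z ^ k • T k v = 0) :
    1 ≤ ∑ k ∈ Icc 1 m, ‖S‖ * ‖T k‖ * ‖z‖ ^ k := by
  have hT0 : T 0 v = -∑ k ∈ Icc 1 m, z ^ k • T k v := by
    rw [sum_range_succ_eq_add_sum_Icc, pow_zero, one_smul] at h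
    exact eq_neg_of_add_eq_zero_left h
  have hbound : ‖v‖ ≤ (∑ k ∈ Icc 1 m, ‖S‖ * ‖T k‖ * ‖z‖ ^ k) * ‖v‖ :=
    calc ‖v‖ = ‖S (T 0 v)‖ := by rw [hS v]
      _ ≤ ‖S‖ * ‖T 0 v‖ := S.le_opNorm _
      _ ≤ ‖S‖ * ∑ k ∈ Icc 1 m, ‖z‖ ^ k * (‖T k‖ * ‖v‖) := by
        gcongr
        rw [hT0, norm_neg]
        refine (norm_sum_le _ _).trans (sum_le_sum fun k _ => ?_)
        rw [norm_smul, norm_pow]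
        gcongr
        exact (T k).le_opNorm v
      _ = (∑ k ∈ Icc 1 m, ‖S‖ * ‖T k‖ * ‖z‖ ^ k) * ‖v‖ := by
        rw [mul_sum, sum_mul]
        exact sum_congr rfl fun k _ => by ring
  exact le_of_mul_le_mul_right (by simpa using hbound) (norm_pos_iff.2 hv)

theorem one_le_sum_opNorm_mul_norm_inv_pow (hS : Function.LeftInverse S (T m)) (hz : z ≠ 0)
    (hv : v ≠ 0) (h : ∑ k ∈ range (m + 1), z ^ k • T k v = 0) :
    1 ≤ ∑ k ∈ Icc 1 m, ‖S‖ * ‖T (m - k)‖ * ‖z‖⁻¹ ^ k := by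
  have hreversed : ∑ k ∈ range (m + 1), z⁻¹ ^ k • T (m - k) v =
      z⁻¹ ^ m • ∑ k ∈ range (m + 1), z ^ k • T k v := by
    rw [smul_sum, ← sum_range_reflect (fun k => z⁻¹ ^ m • z ^ k • T k v)]
    refine sum_congr rfl fun k hk => ?_
    have hkm : k ≤ m := Nat.lt_succ_iff.1 (mem_range.1 hk)
    rw [Nat.add_sub_cancel, smul_smul, pow_sub₀ z hz hkm, inv_pow, inv_pow]
    field_simp
  simpa only [norm_inv] using
    one_le_sum_opNorm_mul_norm_pow (T := fun k => T (m - k)) (z := z⁻¹) (by simpa using hS) hv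
      (by rw [hreversed, h, smul_zero])

end OperatorPolynomial

theorem Matrix.leftInverse_toEuclideanCLM_inv {𝕜 ι : Type*} [RCLike 𝕜] [Fintype ι]
    [DecidableEq ι] {B : Matrix ι ι 𝕜} (hB : IsUnit B.det) :
    Function.LeftInverse (toEuclideanCLM (𝕜 := 𝕜) B⁻¹) (toEuclideanCLM (𝕜 := 𝕜) B) := fun v => by
  rw [← mul_apply_eq_comp, ← map_mul, Matrix.nonsing_inv_mul _ hB, map_one, one_apply_eq_self]

theorem Matrix.sum_pow_smul_toEuclideanCLM_toLp_eq_zero {𝕜 ι : Type*} [RCLike 𝕜] [Fintype ι]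
    [DecidableEq ι] {A : ℕ → Matrix ι ι 𝕜} {m : ℕ} {z : 𝕜} {u : ι → 𝕜}
    (h : (∑ k ∈ range (m + 1), z ^ k • A k).mulVec u = 0) :
    ∑ k ∈ range (m + 1), z ^ k • toEuclideanCLM (𝕜 := 𝕜) (A k) (WithLp.toLp 2 u) = 0 := by
  calc _ = toEuclideanCLM (𝕜 := 𝕜) (∑ k ∈ range (m + 1), z ^ k • A k) (WithLp.toLp 2 u) := by
        simp only [map_sum, map_smul, _root_.sum_apply, _root_.smul_apply]
    _ = 0 := by rw [toEuclideanCLM_toLp, h, WithLp.toLp_zero]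

/-- Theorem 3: with `A_0, A_m` invertible, all eigenvalues of
`P(z) = ∑_k A_k z^k` lie in the annulus `r₁ ≤ |z| ≤ r₂`, where
`r₁ = min_{1≤k≤m} {2^{3(1−m)} C(2m,m+k) 𝒫_k² / (‖A_0⁻¹‖‖A_k‖)}^{1/k}` and
`r₂ = max_{1≤k≤m} {2^{3(m−1)} C(2m,m+k)⁻¹ 𝒫_k⁻² ‖A_{m−k}‖‖A_m⁻¹‖}^{1/k}`. -/
theorem matrixPoly_eigenvalue_annulus_pell {n : ℕ} (m : ℕ) (hm : 0 < m)
    (A : ℕ → Matrix (Fin n) (Fin n) ℂ)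
    (hA0 : IsUnit (A 0).det) (hAm : IsUnit (A m).det)
    (hne : (((Finset.Icc 1 m)).filter fun k => opNorm (A k) ≠ 0).Nonempty)
    (r₁ r₂ : ℝ)
    (hr₁ : r₁ = (((Finset.Icc 1 m)).filter fun k => opNorm (A k) ≠ 0).inf' hne
        fun k => ((2 : ℝ) ^ ((3 : ℤ) * (1 - (m : ℤ))) * (Nat.choose (2 * m) (m + k))
            * (pell k : ℝ) ^ 2 / (opNorm (A 0)⁻¹ * opNorm (A k)))
          ^ ((1 : ℝ) / k))
    (hr₂ : r₂ = (Finset.Icc 1 m).sup' (Finset.nonempty_Icc.mpr hm)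
        fun k => ((2 : ℝ) ^ ((3 : ℤ) * ((m : ℤ) - 1))
            * ((Nat.choose (2 * m) (m + k) : ℝ))⁻¹ * ((pell k : ℝ) ^ 2)⁻¹
            * opNorm (A (m - k)) * opNorm (A m)⁻¹)
          ^ ((1 : ℝ) / k))
    (lam : ℂ) (u : Fin n → ℂ) (hu : u ≠ 0)
    (hlam : (∑ k ∈ Finset.range (m + 1), lam ^ k • A k).mulVec u = 0) :
    r₁ ≤ ‖lam‖ ∧ ‖lam‖ ≤ r₂ := by
  set T : ℕ → EuclideanSpace ℂ (Fin n) →L[ℂ] EuclideanSpace ℂ (Fin n) :=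
    fun k => Matrix.toEuclideanCLM (𝕜 := ℂ) (A k)
  have hv : WithLp.toLp 2 u ≠ 0 := by simpa using hu
  have heig : ∑ k ∈ range (m + 1), lam ^ k • T k (WithLp.toLp 2 u) = 0 :=
    Matrix.sum_pow_smul_toEuclideanCLM_toLp_eq_zero hlam
  have hlam0 : lam ≠ 0 :=
    ne_zero_of_sum_pow_smul_eq_zero (Matrix.leftInverse_toEuclideanCLM_inv hA0) hv heig
  constructor
  · rw [hr₁]
    exact inf'_le_of_one_le_sum_mul_pow (a := fun k => opNorm (A k)) hm (norm_nonneg lam) hne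
      (one_le_sum_opNorm_mul_norm_pow (Matrix.leftInverse_toEuclideanCLM_inv hA0) hv heig)
  · rw [hr₂]
    exact le_sup'_of_one_le_sum_mul_inv_pow (a := fun k => opNorm (A k)) hm (norm_pos_iff.2 hlam0)
      (one_le_sum_opNorm_mul_norm_inv_pow (T := T) (Matrix.leftInverse_toEuclideanCLM_inv hAm)
        hlam0 hv heig)
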